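/- Let ω, u : ℝ × ℝ³ → ℝ³ and ψ : ℝ × ℝ³ → ℝ be smooth. Suppose ω satisfies the Euler vorticity system ∂_t ω + ∇×(ω×u) = 0 and ∇·ω = 0, and ψ is advected: ∂_t ψ + u·∇ψ = 0. Then Ertel's theorem holds: ∂_t(ω·∇ψ) + ∇·[(ω·∇ψ)u] = 0. -/

import Mathlib

/-- Time derivative of a scalar function on `ℝ × ℝ³`. -/
noncomputable def dts (f : ℝ × (Fin 3 → ℝ) → ℝ) (p : ℝ × (Fin 3 → ℝ)) : ℝ :=
  fderiv ℝ f p (1, 0)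

/-- Spatial partial derivative `∂ᵢ` of a scalar function on `ℝ × ℝ³`. -/
noncomputable def dxs (i : Fin 3) (f : ℝ × (Fin 3 → ℝ) → ℝ) (p : ℝ × (Fin 3 → ℝ)) : ℝ :=
  fderiv ℝ f p (0, Pi.single i 1)

/-- Componentwise time derivative of a time-dependent vector field on `ℝ³`. -/
noncomputable def dtv (F : ℝ × (Fin 3 → ℝ) → (Fin 3 → ℝ)) (p : ℝ × (Fin 3 → ℝ)) :
    Fin 3 → ℝ :=
  fun i => dts (fun q => F q i) p

/-- Spatial divergence of a time-dependent vector field on `ℝ³`. -/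
noncomputable def div3 (F : ℝ × (Fin 3 → ℝ) → (Fin 3 → ℝ)) (p : ℝ × (Fin 3 → ℝ)) : ℝ :=
  ∑ i, dxs i (fun q => F q i) p

/-- Spatial curl of a time-dependent vector field on `ℝ³`. -/
noncomputable def curl3 (F : ℝ × (Fin 3 → ℝ) → (Fin 3 → ℝ)) (p : ℝ × (Fin 3 → ℝ)) :
    Fin 3 → ℝ :=
  ![dxs 1 (fun q => F q 2) p - dxs 2 (fun q => F q 1) p,
    dxs 2 (fun q => F q 0) p - dxs 0 (fun q => F q 2) p,
    dxs 0 (fun q => F q 1) p - dxs 1 (fun q => F q 0) p]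

/-- Spatial gradient of a scalar function on `ℝ × ℝ³`. -/
noncomputable def grad3 (f : ℝ × (Fin 3 → ℝ) → ℝ) (p : ℝ × (Fin 3 → ℝ)) : Fin 3 → ℝ :=
  fun i => dxs i f p

/-- Dot product on `ℝ³`. -/
def dot3 (a b : Fin 3 → ℝ) : ℝ := ∑ i, a i * b i

/-- Cross product on `ℝ³`. -/
def cross3 (a b : Fin 3 → ℝ) : Fin 3 → ℝ :=
  ![a 1 * b 2 - a 2 * b 1, a 2 * b 0 - a 0 * b 2, a 0 * b 1 - a 1 * b 0]

section helpers
variable {f g : ℝ × (Fin 3 → ℝ) → ℝ} {p : ℝ × (Fin 3 → ℝ)} {i j : Fin 3}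

lemma dxs_smooth (hf : ContDiff ℝ (⊤ : ℕ∞) f) (i : Fin 3) : ContDiff ℝ (⊤ : ℕ∞) (dxs i f) :=
  (hf.fderiv_right (by simp)).clm_apply contDiff_const

lemma dxs_mul (hf : ContDiff ℝ (⊤ : ℕ∞) f) (hg : ContDiff ℝ (⊤ : ℕ∞) g) :
    dxs i (fun q => f q * g q) p = dxs i f p * g p + f p * dxs i g p := by
  simp only [dxs, fderiv_fun_mul (hf.differentiable (by simp) p) (hg.differentiable (by simp) p),
    ContinuousLinearMap.add_apply, ContinuousLinearMap.smul_apply, smul_eq_mul]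
  ring

lemma dts_mul (hf : ContDiff ℝ (⊤ : ℕ∞) f) (hg : ContDiff ℝ (⊤ : ℕ∞) g) :
    dts (fun q => f q * g q) p = dts f p * g p + f p * dts g p := by
  simp only [dts, fderiv_fun_mul (hf.differentiable (by simp) p) (hg.differentiable (by simp) p),
    ContinuousLinearMap.add_apply, ContinuousLinearMap.smul_apply, smul_eq_mul]
  ring

lemma dxs_add (hf : ContDiff ℝ (⊤ : ℕ∞) f) (hg : ContDiff ℝ (⊤ : ℕ∞) g) :
    dxs i (fun q => f q + g q) p = dxs i f p + dxs i g p := by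
  simp [dxs, fderiv_fun_add (hf.differentiable (by simp) p) (hg.differentiable (by simp) p)]

lemma dts_add (hf : ContDiff ℝ (⊤ : ℕ∞) f) (hg : ContDiff ℝ (⊤ : ℕ∞) g) :
    dts (fun q => f q + g q) p = dts f p + dts g p := by
  simp [dts, fderiv_fun_add (hf.differentiable (by simp) p) (hg.differentiable (by simp) p)]

lemma dxs_sub (hf : ContDiff ℝ (⊤ : ℕ∞) f) (hg : ContDiff ℝ (⊤ : ℕ∞) g) :
    dxs i (fun q => f q - g q) p = dxs i f p - dxs i g p := by
  simp [dxs, fderiv_fun_sub (hf.differentiable (by simp) p) (hg.differentiable (by simp) p)]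

lemma dxs_neg : dxs i (fun q => -f q) p = -dxs i f p := by
  simp [dxs, fderiv_neg]

lemma fderiv_symm (hf : ContDiff ℝ (⊤ : ℕ∞) f) (v w : ℝ × (Fin 3 → ℝ)) :
    fderiv ℝ (fun q => fderiv ℝ f q v) p w = fderiv ℝ (fun q => fderiv ℝ f q w) p v := by
  have hd : DifferentiableAt ℝ (fderiv ℝ f) p :=
    ((hf.fderiv_right (m := (⊤ : ℕ∞)) (by simp)).differentiable (by simp)) p
  have h1 : ∀ z : ℝ × (Fin 3 → ℝ),
      fderiv ℝ (fun q => fderiv ℝ f q z) p = (fderiv ℝ (fderiv ℝ f) p).flip z := by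
    intro z
    rw [fderiv_clm_apply hd (differentiableAt_const z)]
    simp
  have hs : IsSymmSndFDerivAt ℝ f p :=
    hf.contDiffAt.isSymmSndFDerivAt (by rw [minSmoothness_of_isRCLikeNormedField]; exact WithTop.coe_le_coe.mpr le_top)
  have := hs w v
  simp only [h1]
  simpa using this

lemma dts_dxs_comm (hf : ContDiff ℝ (⊤ : ℕ∞) f) :
    dts (dxs i f) p = dxs i (dts f) p := by
  exact fderiv_symm hf (0, Pi.single i 1) (1, 0)

lemma dxs_dxs_comm (hf : ContDiff ℝ (⊤ : ℕ∞) f) :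
    dxs i (dxs j f) p = dxs j (dxs i f) p := by
  exact fderiv_symm hf (0, Pi.single j 1) (0, Pi.single i 1)

end helpers

/-- Ertel's theorem: if `ω` satisfies the Euler vorticity system
`∂_t ω + ∇×(ω×u) = 0`, `∇·ω = 0`, and `ψ` is advected (`∂_t ψ + u·∇ψ = 0`),
then `∂_t(ω·∇ψ) + ∇·[(ω·∇ψ)u] = 0`. -/
theorem stmt_11 (ω u : ℝ × (Fin 3 → ℝ) → (Fin 3 → ℝ))
    (ψ : ℝ × (Fin 3 → ℝ) → ℝ)
    (hω : ContDiff ℝ (⊤ : ℕ∞) ω) (hu : ContDiff ℝ (⊤ : ℕ∞) u) (hψ : ContDiff ℝ (⊤ : ℕ∞) ψ)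
    (heul : ∀ p, dtv ω p + curl3 (fun q => cross3 (ω q) (u q)) p = 0)
    (hdiv : ∀ p, div3 ω p = 0)
    (hadv : ∀ p, dts ψ p + dot3 (u p) (grad3 ψ p) = 0) :
    ∀ p : ℝ × (Fin 3 → ℝ),
      dts (fun q => dot3 (ω q) (grad3 ψ q)) p +
        div3 (fun q => dot3 (ω q) (grad3 ψ q) • u q) p = 0 := by
  intro p
  have hwc : ∀ j, ContDiff ℝ (⊤ : ℕ∞) (fun q => ω q j) := fun j => contDiff_pi.mp hω j
  have huc : ∀ j, ContDiff ℝ (⊤ : ℕ∞) (fun q => u q j) := fun j => contDiff_pi.mp hu j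
  have hDc : ∀ j, ContDiff ℝ (⊤ : ℕ∞) (dxs j ψ) := fun j => dxs_smooth hψ j
  -- ContDiff of E and products
  have c0 := (hwc 0).mul (hDc 0)
  have c1 := (hwc 1).mul (hDc 1)
  have c2 := (hwc 2).mul (hDc 2)
  have cE : ContDiff ℝ (⊤ : ℕ∞) (fun q => ω q 0 * dxs 0 ψ q + ω q 1 * dxs 1 ψ q + ω q 2 * dxs 2 ψ q) :=
    (c0.add c1).add c2
  -- expand the goal
  simp only [div3, dot3, grad3, Fin.sum_univ_three, Pi.smul_apply, smul_eq_mul]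
  simp only [dts_add (c0.add c1) c2, dts_add c0 c1,
    dts_mul (hwc 0) (hDc 0), dts_mul (hwc 1) (hDc 1), dts_mul (hwc 2) (hDc 2),
    dxs_mul cE (huc 0), dxs_mul cE (huc 1), dxs_mul cE (huc 2),
    dxs_add (c0.add c1) c2, dxs_add c0 c1,
    dxs_mul (hwc 0) (hDc 0), dxs_mul (hwc 1) (hDc 1), dxs_mul (hwc 2) (hDc 2)]
  -- euler equation components, expanded
  have hE : ∀ j : Fin 3,
      (dtv ω p + curl3 (fun q => cross3 (ω q) (u q)) p) j = 0 := fun j => congrFun (heul p) j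
  have h0 := hE 0
  have h1 := hE 1
  have h2 := hE 2
  simp only [Pi.add_apply, Pi.zero_apply, dtv, curl3, cross3,
    Matrix.cons_val_zero, Matrix.cons_val_one, Matrix.head_cons,
    Matrix.cons_val_two, Matrix.tail_cons] at h0 h1 h2
  simp only [dxs_sub ((hwc 0).mul (huc 1)) ((hwc 1).mul (huc 0)),
    dxs_sub ((hwc 1).mul (huc 2)) ((hwc 2).mul (huc 1)),
    dxs_sub ((hwc 2).mul (huc 0)) ((hwc 0).mul (huc 2)),
    dxs_mul (hwc 0) (huc 1), dxs_mul (hwc 1) (huc 0),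
    dxs_mul (hwc 1) (huc 2), dxs_mul (hwc 2) (huc 1),
    dxs_mul (hwc 2) (huc 0), dxs_mul (hwc 0) (huc 2)] at h0 h1 h2
  -- divergence free
  have hd := hdiv p
  simp only [div3, Fin.sum_univ_three] at hd
  -- advection: dts ψ as a function
  have hψt : dts ψ = fun q => -(u q 0 * dxs 0 ψ q + u q 1 * dxs 1 ψ q + u q 2 * dxs 2 ψ q) := by
    funext q
    have := hadv q
    simp only [dot3, grad3, Fin.sum_univ_three] at this
    linarith
  have cA : ContDiff ℝ (⊤ : ℕ∞) (fun q => u q 0 * dxs 0 ψ q + u q 1 * dxs 1 ψ q + u q 2 * dxs 2 ψ q) :=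
    (((huc 0).mul (hDc 0)).add ((huc 1).mul (hDc 1))).add ((huc 2).mul (hDc 2))
  -- replace dts (dxs j ψ) p by spatial derivatives
  simp only [dts_dxs_comm hψ, hψt, dxs_neg,
    dxs_add (((huc 0).mul (hDc 0)).add ((huc 1).mul (hDc 1))) ((huc 2).mul (hDc 2)),
    dxs_add ((huc 0).mul (hDc 0)) ((huc 1).mul (hDc 1)),
    dxs_mul (huc 0) (hDc 0), dxs_mul (huc 1) (hDc 1), dxs_mul (huc 2) (hDc 2)]
  -- symmetry of second derivatives of ψ
  have s01 : dxs 1 (dxs 0 ψ) p = dxs 0 (dxs 1 ψ) p := dxs_dxs_comm hψ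
  have s02 : dxs 2 (dxs 0 ψ) p = dxs 0 (dxs 2 ψ) p := dxs_dxs_comm hψ
  have s12 : dxs 2 (dxs 1 ψ) p = dxs 1 (dxs 2 ψ) p := dxs_dxs_comm hψ
  simp only [s01, s02, s12] at *
  linear_combination (dxs 0 ψ p) * h0 + (dxs 1 ψ p) * h1 + (dxs 2 ψ p) * h2 +
    (u p 0 * dxs 0 ψ p + u p 1 * dxs 1 ψ p + u p 2 * dxs 2 ψ p) * hd
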